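/- arXiv:1812.11750 — 2 statements merged into one kernel-verified Lean document; each statement's English description precedes it below -/
import Mathlib

section
/- Let g and h be α-strongly convex functions on a real inner product space, and suppose a sequence (x^t) satisfies: y^t ∈ ∂h(x^t) and x^{t+1} minimizes x ↦ g(x) − ⟨x, y^t⟩. Then f(x^t) − f(x^{t+1}) ≥ α‖x^{t+1} − x^t‖² for all t, where f = g − h. In particular the sequence (f(x^t)) is nonincreasing. -/
open scoped InnerProductSpace

/-- Key self-improvement: if `φ` is `α`-strongly convex and `φ a + l * c ≤ φ (a + l • (z - a))`
for all `l ∈ (0,1)`, then `φ a + c + α/2 * ‖z - a‖² ≤ φ z`. -/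
lemma dc_key {E : Type*} [NormedAddCommGroup E] [InnerProductSpace ℝ E] {α : ℝ}
    (φ : E → ℝ) (hφ : StrongConvexOn Set.univ α φ) (a z : E) (c : ℝ)
    (hl : ∀ l : ℝ, l ∈ Set.Ioo (0:ℝ) 1 → φ a + l * c ≤ φ (a + l • (z - a))) :
    φ a + c + α / 2 * ‖z - a‖ ^ 2 ≤ φ z := by
  have step : ∀ l : ℝ, l ∈ Set.Ioo (0:ℝ) 1 →
      φ a + c + (1 - l) * (α / 2 * ‖z - a‖ ^ 2) ≤ φ z := by
    intro l hl'
    obtain ⟨hl0, hl1⟩ := hl'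
    have hsc := hφ.2 (Set.mem_univ z) (Set.mem_univ a) hl0.le (by linarith : (0:ℝ) ≤ 1 - l)
      (by ring)
    have heq : l • z + (1 - l) • a = a + l • (z - a) := by
      simp [smul_sub, sub_smul]; abel
    rw [heq] at hsc
    have h1 := hl l ⟨hl0, hl1⟩
    simp only [smul_eq_mul] at hsc
    nlinarith [h1.trans hsc]
  have htend : Filter.Tendsto (fun l : ℝ => φ a + c + (1 - l) * (α / 2 * ‖z - a‖ ^ 2))
      (nhdsWithin 0 (Set.Ioi 0)) (nhds (φ a + c + α / 2 * ‖z - a‖ ^ 2)) := by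
    have : Filter.Tendsto (fun l : ℝ => φ a + c + (1 - l) * (α / 2 * ‖z - a‖ ^ 2))
        (nhds 0) (nhds (φ a + c + (1 - 0) * (α / 2 * ‖z - a‖ ^ 2))) :=
      (continuous_const.add ((continuous_const.sub continuous_id).mul continuous_const)).tendsto 0
    simpa using this.mono_left nhdsWithin_le_nhds
  refine le_of_tendsto htend ?_
  filter_upwards [Ioo_mem_nhdsGT_of_mem (by norm_num : (0:ℝ) ∈ Set.Ico 0 1)] with l hl'
  exact step l hl'


/-- descent property of the DC algorithm. If `g` and `h` are
`α`-strongly convex on a real inner product space, `y t` is a subgradient of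
`h` at `x t`, and `x (t+1)` minimizes `z ↦ g z − ⟪z, y t⟫`, then for
`f = g − h` we have `f (x t) − f (x (t+1)) ≥ α ‖x (t+1) − x t‖²`; in
particular `t ↦ f (x t)` is nonincreasing. -/
theorem dc_algorithm_descent {E : Type*} [NormedAddCommGroup E]
    [InnerProductSpace ℝ E] {α : ℝ} (hα : 0 < α) (g h : E → ℝ)
    (hg : StrongConvexOn Set.univ α g) (hh : StrongConvexOn Set.univ α h)
    (x y : ℕ → E)
    (hy : ∀ t, ∀ z, h (x t) + ⟪y t, z - x t⟫_ℝ ≤ h z)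
    (hmin : ∀ t, IsMinOn (fun z => g z - ⟪z, y t⟫_ℝ) Set.univ (x (t + 1))) :
    (∀ t, α * ‖x (t + 1) - x t‖ ^ 2 ≤
        (g (x t) - h (x t)) - (g (x (t + 1)) - h (x (t + 1)))) ∧
      ∀ t, g (x (t + 1)) - h (x (t + 1)) ≤ g (x t) - h (x t) := by
  have main : ∀ t, α * ‖x (t + 1) - x t‖ ^ 2 ≤
      (g (x t) - h (x t)) - (g (x (t + 1)) - h (x (t + 1))) := by
    intro t
    set a := x (t + 1) with ha
    set b := x t with hb
    set w := y t with hw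
    -- (A): from minimality of a for z ↦ g z - ⟪z, w⟫
    have hA : g a + ⟪b - a, w⟫_ℝ + α / 2 * ‖b - a‖ ^ 2 ≤ g b := by
      apply dc_key g hg a b ⟪b - a, w⟫_ℝ
      intro l hl'
      have := hmin t (Set.mem_univ (a + l • (b - a)))
      rw [← ha, ← hw] at this
      simp only [Set.mem_setOf_eq, inner_add_left, real_inner_smul_left] at this
      linarith
    -- (B): from the subgradient inequality for h at b
    have hB : h b + ⟪w, a - b⟫_ℝ + α / 2 * ‖a - b‖ ^ 2 ≤ h a := by
      apply dc_key h hh b a ⟪w, a - b⟫_ℝ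
      intro l hl'
      have := hy t (b + l • (a - b))
      have hinner : ⟪w, b + l • (a - b) - b⟫_ℝ = l * ⟪w, a - b⟫_ℝ := by
        rw [add_sub_cancel_left, real_inner_smul_right]
      rw [hinner] at this
      linarith
    have hcomm : ⟪b - a, w⟫_ℝ = ⟪w, b - a⟫_ℝ := real_inner_comm _ _
    have hnegi : ⟪w, a - b⟫_ℝ = -⟪w, b - a⟫_ℝ := by
      rw [← inner_neg_right]; congr 1; abel
    have hnorm : ‖b - a‖ = ‖a - b‖ := norm_sub_rev _ _
    rw [hnorm] at hA
    linarith [hA, hB]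
  refine ⟨main, fun t => ?_⟩
  have h1 := main t
  have h2 : 0 ≤ α * ‖x (t + 1) - x t‖ ^ 2 :=
    mul_nonneg hα.le (sq_nonneg _)
  linarith
end

section
/- Under the DC algorithm iteration for f = g − h with g, h α-strongly convex, if f is bounded below by its global minimum f⋆, then for all t ≥ 0 the average of the squared successive differences satisfies (1/(t+1)) Σ_{i=0}^{t} ‖x^{i+1} − x^i‖² ≤ (f(x^0) − f⋆)/(α(t+1)). -/
open scoped InnerProductSpace

private lemma limit_lam (A B c : ℝ) (hc : 0 ≤ c)
    (H : ∀ l : ℝ, 0 < l → l ≤ 1 → A + (1 - l) * c ≤ B) : A + c ≤ B := by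
  refine le_of_forall_pos_le_add fun ε hε => ?_
  set l := min 1 (ε / (c + 1)) with hl
  have hl0 : 0 < l := lt_min one_pos (div_pos hε (by linarith))
  have hl1 : l ≤ 1 := min_le_left _ _
  have h1 : A + (1 - l) * c ≤ B := H l hl0 hl1
  have h2 : l * c ≤ ε := by
    have hle : l ≤ ε / (c + 1) := min_le_right _ _
    have hc1 : (0:ℝ) < c + 1 := by linarith
    have h3 := mul_le_mul_of_nonneg_right hle hc
    have h4 : ε / (c + 1) * c ≤ ε := by
      rw [div_mul_eq_mul_div, div_le_iff₀ hc1]; nlinarith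
    linarith
  nlinarith

/-- O(1/t) rate of the DC algorithm. Under the DC iteration for
`f = g − h` with `g, h` `α`-strongly convex (`y t ∈ ∂h(x t)` and `x (t+1)`
minimizing `z ↦ g z − ⟪z, y t⟫`), if `f` is bounded below by its global
minimum `fstar`, then the average of the squared successive differences
satisfies `(1/(t+1)) Σ_{i=0}^{t} ‖x^{i+1} − x^i‖² ≤ (f(x⁰) − fstar)/(α(t+1))`. -/
theorem dc_algorithm_rate {E : Type*} [NormedAddCommGroup E]
    [InnerProductSpace ℝ E] {α : ℝ} (hα : 0 < α) (g h : E → ℝ)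
    (hg : StrongConvexOn Set.univ α g) (hh : StrongConvexOn Set.univ α h)
    (x y : ℕ → E)
    (hy : ∀ t, ∀ z, h (x t) + ⟪y t, z - x t⟫_ℝ ≤ h z)
    (hmin : ∀ t, IsMinOn (fun z => g z - ⟪z, y t⟫_ℝ) Set.univ (x (t + 1)))
    (fstar : ℝ) (hlb : ∀ z, fstar ≤ g z - h z) :
    ∀ t : ℕ,
      (∑ i ∈ Finset.range (t + 1), ‖x (i + 1) - x i‖ ^ 2) / (t + 1) ≤
        ((g (x 0) - h (x 0)) - fstar) / (α * (t + 1)) := by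
  -- strengthened subgradient inequality for h
  have hsub : ∀ t z, h (x t) + ⟪y t, z - x t⟫_ℝ + α / 2 * ‖z - x t‖ ^ 2 ≤ h z := by
    intro t z
    have := limit_lam (h (x t) + ⟪y t, z - x t⟫_ℝ) (h z) (α / 2 * ‖z - x t‖ ^ 2)
      (by positivity) ?_
    · linarith
    intro l hl0 hl1
    have hcomb := hh.2 (Set.mem_univ (x t)) (Set.mem_univ z)
      (show (0:ℝ) ≤ 1 - l by linarith) hl0.le (show (1 - l) + l = 1 by ring)
    have hsg := hy t ((1 - l) • x t + l • z)
    have hpt : (1 - l) • x t + l • z - x t = l • (z - x t) := by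
      rw [smul_sub]; module
    rw [hpt, inner_smul_right] at hsg
    have hnorm : ‖x t - z‖ = ‖z - x t‖ := norm_sub_rev _ _
    rw [hnorm] at hcomb
    simp only [smul_eq_mul] at hcomb
    have key : h (x t) + l * ⟪y t, z - x t⟫_ℝ ≤
        (1 - l) * h (x t) + l * h z - (1 - l) * l * (α / 2 * ‖z - x t‖ ^ 2) :=
      le_trans hsg hcomb
    have : l * (h (x t) + ⟪y t, z - x t⟫_ℝ + (1 - l) * (α / 2 * ‖z - x t‖ ^ 2)) ≤
        l * h z := by nlinarith
    have hfin := le_of_mul_le_mul_left this hl0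
    linarith
  -- quadratic growth at the minimizer
  have hgrow : ∀ t z, g (x (t + 1)) - ⟪x (t + 1), y t⟫_ℝ + α / 2 * ‖z - x (t + 1)‖ ^ 2 ≤
      g z - ⟪z, y t⟫_ℝ := by
    intro t z
    have := limit_lam (g (x (t + 1)) - ⟪x (t + 1), y t⟫_ℝ) (g z - ⟪z, y t⟫_ℝ)
      (α / 2 * ‖z - x (t + 1)‖ ^ 2) (by positivity) ?_
    · linarith
    intro l hl0 hl1
    set w := x (t + 1) with hw
    have hcomb := hg.2 (Set.mem_univ w) (Set.mem_univ z)
      (show (0:ℝ) ≤ 1 - l by linarith) hl0.le (show (1 - l) + l = 1 by ring)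
    have hm := hmin t (Set.mem_univ ((1 - l) • w + l • z))
    simp only [smul_eq_mul] at hcomb
    have hin : ⟪(1 - l) • w + l • z, y t⟫_ℝ = (1 - l) * ⟪w, y t⟫_ℝ + l * ⟪z, y t⟫_ℝ := by
      rw [inner_add_left, inner_smul_left, inner_smul_left]; norm_num
    have hnorm : ‖w - z‖ = ‖z - w‖ := norm_sub_rev _ _
    rw [hnorm] at hcomb
    have hm' : g w - ⟪w, y t⟫_ℝ ≤ g ((1 - l) • w + l • z) - ⟪(1 - l) • w + l • z, y t⟫_ℝ := hm
    rw [hin] at hm'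
    have key : g w - ⟪w, y t⟫_ℝ ≤
        (1 - l) * g w + l * g z - (1 - l) * l * (α / 2 * ‖z - w‖ ^ 2)
          - ((1 - l) * ⟪w, y t⟫_ℝ + l * ⟪z, y t⟫_ℝ) := by linarith
    have : l * (g w - ⟪w, y t⟫_ℝ + (1 - l) * (α / 2 * ‖z - w‖ ^ 2)) ≤
        l * (g z - ⟪z, y t⟫_ℝ) := by nlinarith
    have hfin := le_of_mul_le_mul_left this hl0
    linarith
  -- per-step descent
  have hdesc : ∀ t, α * ‖x (t + 1) - x t‖ ^ 2 ≤
      (g (x t) - h (x t)) - (g (x (t + 1)) - h (x (t + 1))) := by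
    intro t
    have h1 := hsub t (x (t + 1))
    have h2 := hgrow t (x t)
    have hn : ‖x t - x (t + 1)‖ = ‖x (t + 1) - x t‖ := norm_sub_rev _ _
    rw [hn] at h2
    have hip : ⟪y t, x (t + 1) - x t⟫_ℝ = ⟪x (t + 1), y t⟫_ℝ - ⟪x t, y t⟫_ℝ := by
      rw [inner_sub_right, real_inner_comm (y t) (x (t+1)), real_inner_comm (y t) (x t)]
    rw [hip] at h1
    linarith
  -- telescoping
  have hsum : ∀ t : ℕ, α * ∑ i ∈ Finset.range (t + 1), ‖x (i + 1) - x i‖ ^ 2 ≤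
      (g (x 0) - h (x 0)) - fstar := by
    intro t
    have htel : α * ∑ i ∈ Finset.range (t + 1), ‖x (i + 1) - x i‖ ^ 2 ≤
        (g (x 0) - h (x 0)) - (g (x (t + 1)) - h (x (t + 1))) := by
      induction t with
      | zero => simpa using hdesc 0
      | succ n ih =>
        rw [Finset.sum_range_succ, mul_add]
        have := hdesc (n + 1)
        linarith
    have := hlb (x (t + 1))
    linarith
  intro t
  have ht1 : (0:ℝ) < (t : ℝ) + 1 := by positivity
  rw [div_le_div_iff₀ ht1 (by positivity)]
  have := hsum t
  nlinarith [this, mul_le_mul_of_nonneg_right this (le_of_lt ht1)]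
end
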